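/- For Haar-distributed U ∈ U(N) and distinct positive integers r ≠ s, the traces are uncorrelated: E[Tr(U^r) · conj(Tr(U^s))] = 0. -/
import Mathlib


open Matrix MeasureTheory

/-- For Haar-distributed `U ∈ U(N)` and distinct positive integers `r ≠ s`,
`E[Tr (U^r) · conj (Tr (U^s))] = 0`. -/
theorem integral_trace_pow_mul_conj_trace_pow_haar
    (N : ℕ) [MeasurableSpace (Matrix.unitaryGroup (Fin N) ℂ)]
    [BorelSpace (Matrix.unitaryGroup (Fin N) ℂ)]
    (μ : Measure (Matrix.unitaryGroup (Fin N) ℂ))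
    [μ.IsHaarMeasure] [IsProbabilityMeasure μ]
    (r s : ℕ) (hr : 0 < r) (hs : 0 < s) (hrs : r ≠ s) :
    ∫ U : Matrix.unitaryGroup (Fin N) ℂ,
        ((U : Matrix (Fin N) (Fin N) ℂ) ^ r).trace *
          (starRingEnd ℂ) (((U : Matrix (Fin N) (Fin N) ℂ) ^ s).trace) ∂μ = 0 := by
  have hrs' : (r : ℝ) - (s : ℝ) ≠ 0 := by
    intro h
    exact hrs (Nat.cast_injective (by linarith : (r : ℝ) = (s : ℝ)))
  set θ : ℝ := Real.pi / ((r : ℝ) - s) with hθ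
  set ζ : ℂ := Complex.exp ((θ : ℂ) * Complex.I) with hζ
  have hconj : (starRingEnd ℂ) ζ = Complex.exp (-((θ : ℂ) * Complex.I)) := by
    rw [hζ, ← Complex.exp_conj]
    congr 1
    simp
  have hunit : ζ * (starRingEnd ℂ) ζ = 1 := by
    rw [hconj, hζ, ← Complex.exp_add, add_neg_cancel, Complex.exp_zero]
  have hg : (ζ • (1 : Matrix (Fin N) (Fin N) ℂ)) ∈ Matrix.unitaryGroup (Fin N) ℂ := by
    constructor
    · show star (ζ • (1 : Matrix (Fin N) (Fin N) ℂ)) * (ζ • 1) = 1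
      rw [star_smul, star_one, smul_mul_smul_comm, one_mul]
      show ((starRingEnd ℂ) ζ * ζ) • (1 : Matrix (Fin N) (Fin N) ℂ) = 1
      rw [mul_comm, hunit, one_smul]
    · show (ζ • (1 : Matrix (Fin N) (Fin N) ℂ)) * star (ζ • 1) = 1
      rw [star_smul, star_one, smul_mul_smul_comm, one_mul]
      show (ζ * (starRingEnd ℂ) ζ) • (1 : Matrix (Fin N) (Fin N) ℂ) = 1
      rw [hunit, one_smul]
  set g : Matrix.unitaryGroup (Fin N) ℂ := ⟨ζ • 1, hg⟩ with hgdef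
  set f : Matrix.unitaryGroup (Fin N) ℂ → ℂ := fun U =>
    ((U : Matrix (Fin N) (Fin N) ℂ) ^ r).trace *
      (starRingEnd ℂ) (((U : Matrix (Fin N) (Fin N) ℂ) ^ s).trace) with hf
  have hfactor : ζ ^ r * (starRingEnd ℂ) ζ ^ s = -1 := by
    rw [hconj, hζ, ← Complex.exp_nat_mul, ← Complex.exp_nat_mul, ← Complex.exp_add]
    have : (r : ℂ) * ((θ : ℂ) * Complex.I) + (s : ℂ) * -((θ : ℂ) * Complex.I)
        = ((Real.pi : ℂ)) * Complex.I := by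
      have hrsC : ((r : ℂ) - (s : ℂ)) ≠ 0 := by
        intro h
        apply hrs'
        have := congrArg Complex.re h
        simpa using this
      have hθπ : ((r : ℂ) - (s : ℂ)) * (θ : ℂ) = (Real.pi : ℂ) := by
        rw [hθ]
        push_cast
        rw [mul_div_assoc']
        exact mul_div_cancel_left₀ _ hrsC
      ring_nf
      ring_nf at hθπ
      linear_combination Complex.I * hθπ
    rw [this, Complex.exp_pi_mul_I]
  have hpt : ∀ x : Matrix.unitaryGroup (Fin N) ℂ, f (g * x) = -1 * f x := by
    intro x
    have hcoe : ((g * x : Matrix.unitaryGroup (Fin N) ℂ) : Matrix (Fin N) (Fin N) ℂ)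
        = ζ • (x : Matrix (Fin N) (Fin N) ℂ) := by
      show (ζ • (1 : Matrix (Fin N) (Fin N) ℂ)) * (x : Matrix (Fin N) (Fin N) ℂ) = _
      rw [smul_mul_assoc, one_mul]
    rw [hf]
    simp only [hcoe, smul_pow, trace_smul, smul_eq_mul, _root_.map_mul, map_pow]
    rw [← hfactor]
    ring
  have hinv : ∫ x, f (g * x) ∂μ = ∫ x, f x ∂μ :=
    MeasureTheory.integral_mul_left_eq_self f g
  have h2 : ∫ x, f (g * x) ∂μ = -∫ x, f x ∂μ := by
    calc ∫ x, f (g * x) ∂μ = ∫ x, -1 * f x ∂μ := by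
          congr 1; funext x; exact hpt x
      _ = -∫ x, f x ∂μ := by
          simp [integral_neg]
  rw [hinv] at h2
  have hzero : ∫ x, f x ∂μ = 0 := by linear_combination (h2 : _) / 2
  exact hzero
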